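/- Let V and W be finite-dimensional vector spaces over a field k, and let σ_W : W⊗W → W⊗W, φ : V⊗W → W⊗V, ψ : W⊗V → V⊗W be linear isomorphisms satisfying: (e) (σ_W⊗id)∘(id⊗φ)∘(φ⊗id) = (id⊗φ)∘(φ⊗id)∘(id⊗σ_W) on V⊗W⊗W, (f) (φ⊗id)∘(id⊗σ_W)∘(ψ⊗id) = (id⊗ψ)∘(σ_W⊗id)∘(id⊗φ) on W⊗V⊗W, and (g) (ψ⊗id)∘(id⊗ψ)∘(σ_W⊗id) = (id⊗σ_W)∘(ψ⊗id)∘(id⊗ψ) on W⊗W⊗V. Then, setting τ := ψ∘φ : V⊗W → V⊗W, the mixed braid equation (τ⊗id)∘(id⊗σ_W)∘(τ⊗id)∘(id⊗σ_W) = (id⊗σ_W)∘(τ⊗id)∘(id⊗σ_W)∘(τ⊗id) holds on V⊗W⊗W. -/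

import Mathlib

open TensorProduct LinearMap

/-- Apply a linear map to the first two factors of a right-nested triple tensor product,
using the canonical associativity identifications. -/
noncomputable def fstMap (k : Type*) [Field k] {A B A' B' : Type*}
    [AddCommGroup A] [Module k A] [AddCommGroup B] [Module k B]
    [AddCommGroup A'] [Module k A'] [AddCommGroup B'] [Module k B']
    (C : Type*) [AddCommGroup C] [Module k C]
    (f : A ⊗[k] B →ₗ[k] A' ⊗[k] B') :
    A ⊗[k] (B ⊗[k] C) →ₗ[k] A' ⊗[k] (B' ⊗[k] C) :=
  (TensorProduct.assoc k A' B' C).toLinearMap ∘ₗ f.rTensor C ∘ₗ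
    (TensorProduct.assoc k A B C).symm.toLinearMap

/-! Each side is rewritten, by (f), (g), (e) on the left and by (f) on the right, into
`σ₂₃ ∘ ψ₁₂ ∘ ψ₂₃ ∘ σ₁₂ ∘ φ₂₃ ∘ φ₁₂`; only the relations between the maps are used, not the
tensor structure. -/

theorem fstMap_comp (k : Type*) [Field k] {A B A' B' A'' B'' : Type*}
    [AddCommGroup A] [Module k A] [AddCommGroup B] [Module k B]
    [AddCommGroup A'] [Module k A'] [AddCommGroup B'] [Module k B']
    [AddCommGroup A''] [Module k A''] [AddCommGroup B''] [Module k B'']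
    (C : Type*) [AddCommGroup C] [Module k C]
    (g : A' ⊗[k] B' →ₗ[k] A'' ⊗[k] B'') (f : A ⊗[k] B →ₗ[k] A' ⊗[k] B') :
    fstMap k C (g ∘ₗ f) = fstMap k C g ∘ₗ fstMap k C f := by
  ext a b c
  simp [fstMap]

/-- Subscripts record the factors acted on, e.g. `φ₁₂ = φ ⊗ id` on `V ⊗ W ⊗ W` and
`φ₂₃ = id ⊗ φ` on `W ⊗ V ⊗ W`. -/
theorem mixed_braid_of_relations {R X Y Z : Type*} [Semiring R]
    [AddCommMonoid X] [Module R X] [AddCommMonoid Y] [Module R Y]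
    [AddCommMonoid Z] [Module R Z]
    (φ₁₂ : X →ₗ[R] Y) (ψ₁₂ : Y →ₗ[R] X) (σ₂₃ : X →ₗ[R] X)
    (φ₂₃ : Y →ₗ[R] Z) (ψ₂₃ : Z →ₗ[R] Y) (σ₁₂ : Z →ₗ[R] Z)
    (he : σ₁₂ ∘ₗ φ₂₃ ∘ₗ φ₁₂ = φ₂₃ ∘ₗ φ₁₂ ∘ₗ σ₂₃)
    (hf : φ₁₂ ∘ₗ σ₂₃ ∘ₗ ψ₁₂ = ψ₂₃ ∘ₗ σ₁₂ ∘ₗ φ₂₃)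
    (hg : ψ₁₂ ∘ₗ ψ₂₃ ∘ₗ σ₁₂ = σ₂₃ ∘ₗ ψ₁₂ ∘ₗ ψ₂₃) :
    (ψ₁₂ ∘ₗ φ₁₂) ∘ₗ σ₂₃ ∘ₗ (ψ₁₂ ∘ₗ φ₁₂) ∘ₗ σ₂₃ =
      σ₂₃ ∘ₗ (ψ₁₂ ∘ₗ φ₁₂) ∘ₗ σ₂₃ ∘ₗ (ψ₁₂ ∘ₗ φ₁₂) := by
  ext x
  calc ψ₁₂ (φ₁₂ (σ₂₃ (ψ₁₂ (φ₁₂ (σ₂₃ x)))))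
      = ψ₁₂ (ψ₂₃ (σ₁₂ (φ₂₃ (φ₁₂ (σ₂₃ x))))) := congrArg ψ₁₂ (LinearMap.congr_fun hf _)
    _ = σ₂₃ (ψ₁₂ (ψ₂₃ (φ₂₃ (φ₁₂ (σ₂₃ x))))) := LinearMap.congr_fun hg _
    _ = σ₂₃ (ψ₁₂ (ψ₂₃ (σ₁₂ (φ₂₃ (φ₁₂ x))))) :=
      congrArg (σ₂₃ ∘ ψ₁₂ ∘ ψ₂₃) (LinearMap.congr_fun he x).symm
    _ = σ₂₃ (ψ₁₂ (φ₁₂ (σ₂₃ (ψ₁₂ (φ₁₂ x))))) :=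
      congrArg (σ₂₃ ∘ ψ₁₂) (LinearMap.congr_fun hf _).symm

theorem tau_mixed_braid_general (k : Type*) [Field k] (V W : Type*)
    [AddCommGroup V] [Module k V]
    [AddCommGroup W] [Module k W]
    (σW : W ⊗[k] W ≃ₗ[k] W ⊗[k] W)
    (φ : V ⊗[k] W ≃ₗ[k] W ⊗[k] V)
    (ψ : W ⊗[k] V ≃ₗ[k] V ⊗[k] W)
    -- (e) on V⊗W⊗W
    (he : fstMap k V σW.toLinearMap ∘ₗ lTensor W φ.toLinearMap ∘ₗ fstMap k W φ.toLinearMap =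
      lTensor W φ.toLinearMap ∘ₗ fstMap k W φ.toLinearMap ∘ₗ lTensor V σW.toLinearMap)
    -- (f) on W⊗V⊗W
    (hf : fstMap k W φ.toLinearMap ∘ₗ lTensor V σW.toLinearMap ∘ₗ fstMap k W ψ.toLinearMap =
      lTensor W ψ.toLinearMap ∘ₗ fstMap k V σW.toLinearMap ∘ₗ lTensor W φ.toLinearMap)
    -- (g) on W⊗W⊗V
    (hg : fstMap k W ψ.toLinearMap ∘ₗ lTensor W ψ.toLinearMap ∘ₗ fstMap k V σW.toLinearMap =
      lTensor V σW.toLinearMap ∘ₗ fstMap k W ψ.toLinearMap ∘ₗ lTensor W ψ.toLinearMap) :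
    fstMap k W (ψ.toLinearMap ∘ₗ φ.toLinearMap) ∘ₗ lTensor V σW.toLinearMap ∘ₗ
        fstMap k W (ψ.toLinearMap ∘ₗ φ.toLinearMap) ∘ₗ lTensor V σW.toLinearMap =
      lTensor V σW.toLinearMap ∘ₗ fstMap k W (ψ.toLinearMap ∘ₗ φ.toLinearMap) ∘ₗ
        lTensor V σW.toLinearMap ∘ₗ fstMap k W (ψ.toLinearMap ∘ₗ φ.toLinearMap) := by
  rw [fstMap_comp]
  exact mixed_braid_of_relations _ _ _ _ _ _ he hf hg

/-- Given linear isomorphisms `σ_W : W⊗W ≃ W⊗W`, `φ : V⊗W ≃ W⊗V`, `ψ : W⊗V ≃ V⊗W`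
satisfying the braid-type identities (e), (f) and (g), the composite `τ := ψ∘φ`
satisfies the mixed braid equation
`(τ⊗id)∘(id⊗σ_W)∘(τ⊗id)∘(id⊗σ_W) = (id⊗σ_W)∘(τ⊗id)∘(id⊗σ_W)∘(τ⊗id)` on `V⊗W⊗W`. -/
theorem tau_mixed_braid (k : Type*) [Field k] (V W : Type*)
    [AddCommGroup V] [Module k V] [FiniteDimensional k V]
    [AddCommGroup W] [Module k W] [FiniteDimensional k W]
    (σW : W ⊗[k] W ≃ₗ[k] W ⊗[k] W)
    (φ : V ⊗[k] W ≃ₗ[k] W ⊗[k] V)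
    (ψ : W ⊗[k] V ≃ₗ[k] V ⊗[k] W)
    -- (e) on V⊗W⊗W
    (he : fstMap k V σW.toLinearMap ∘ₗ lTensor W φ.toLinearMap ∘ₗ fstMap k W φ.toLinearMap =
      lTensor W φ.toLinearMap ∘ₗ fstMap k W φ.toLinearMap ∘ₗ lTensor V σW.toLinearMap)
    -- (f) on W⊗V⊗W
    (hf : fstMap k W φ.toLinearMap ∘ₗ lTensor V σW.toLinearMap ∘ₗ fstMap k W ψ.toLinearMap =
      lTensor W ψ.toLinearMap ∘ₗ fstMap k V σW.toLinearMap ∘ₗ lTensor W φ.toLinearMap)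
    -- (g) on W⊗W⊗V
    (hg : fstMap k W ψ.toLinearMap ∘ₗ lTensor W ψ.toLinearMap ∘ₗ fstMap k V σW.toLinearMap =
      lTensor V σW.toLinearMap ∘ₗ fstMap k W ψ.toLinearMap ∘ₗ lTensor W ψ.toLinearMap) :
    fstMap k W (ψ.toLinearMap ∘ₗ φ.toLinearMap) ∘ₗ lTensor V σW.toLinearMap ∘ₗ
        fstMap k W (ψ.toLinearMap ∘ₗ φ.toLinearMap) ∘ₗ lTensor V σW.toLinearMap =
      lTensor V σW.toLinearMap ∘ₗ fstMap k W (ψ.toLinearMap ∘ₗ φ.toLinearMap) ∘ₗ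
        lTensor V σW.toLinearMap ∘ₗ fstMap k W (ψ.toLinearMap ∘ₗ φ.toLinearMap) :=
  tau_mixed_braid_general k V W σW φ ψ he hf hg
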